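/- Let κ be an inaccessible cardinal and T a κ-regressive κ-Kurepa tree on κ, i.e., a κ-tree on κ with κ^+-many branches such that for each inaccessible δ < κ there is a regressive map f : T_δ → T_{<δ} satisfying f(x) <_T x for all x, and such that whenever x, y ∈ T_δ are <_T-incomparable then x ∧ y <_T f(x), f(y). If j : V → M is an elementary embedding with critical point κ, M transitive, and some ordinal of M is above all ranks involved, then no such T can exist in the presence of a regressive map on level κ of j(T): more precisely, the map sending each cofinal branch b of T to b_{α_b}, where α_b < κ is least with f(j(b)_κ) <_T j(b)_{α_b} for a fixed regressive f : j(T)_κ → j(T)_{<κ} in M, is injective from the set of branches of T into T. Consequently κ is not measurable in any model containing a κ-regressive κ-Kurepa tree together with such an embedding restricted appropriately (since T has κ^+ branches but |T| = κ). -/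

import Mathlib

set_option autoImplicit false

noncomputable section

open FirstOrder Language Set

universe u

/-! ## The language of set theory (one binary relation, read as membership) -/

/-- We read the binary relation of `Language.order` as set-membership. -/
instance ZFSet.instLE : LE ZFSet.{0} := ⟨fun x y => x ∈ y⟩

instance zfStructure : Language.order.Structure ZFSet.{0} := Language.orderStructure ZFSet


instance subclassStructure (W : Set ZFSet.{0}) : Language.order.Structure W :=
  Language.orderStructure W

/-! ## Von Neumann ordinals inside `ZFSet` -/

/-- The von Neumann ordinal associated to an ordinal. -/
noncomputable def ordZF (o : Ordinal.{0}) : ZFSet.{0} :=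
  ZFSet.range (fun i : o.ToType => ordZF ((Ordinal.ToType.mk (o := o)).symm i).1)
termination_by o
decreasing_by exact ((Ordinal.ToType.mk (o := o)).symm i).2

/-- `V_θ` as a class of sets, relative to an ambient class `W`. -/
def VsetIn (W : Set ZFSet.{0}) (θ : Ordinal.{0}) : Set ZFSet.{0} :=
  {x | x ∈ W ∧ x.rank < θ}

/-- `V_θ` as a class of sets. -/
def Vset (θ : Ordinal.{0}) : Set ZFSet.{0} := VsetIn Set.univ θ

/-- Code a set of ordinals, bounded by `b`, as a `ZFSet`. -/
def zfOfSet (X : Set Ordinal.{0}) (b : Ordinal.{0}) : ZFSet.{0} :=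
  ZFSet.sep (fun z => ∃ α ∈ X, z = ordZF α) (ordZF b)

/-! ## Clubs and stationary sets -/

/-- `C` is closed and unbounded in `λ`. -/
def IsClubIn (C : Set Ordinal.{0}) (l : Ordinal.{0}) : Prop :=
  (∀ x ∈ C, x < l) ∧ (∀ a < l, ∃ b ∈ C, a ≤ b) ∧
    (∀ a < l, (∀ b < a, ∃ c ∈ C, b < c ∧ c < a) → (0 < a) → a ∈ C)

/-- `S` is stationary in `λ`. -/
def IsStationaryIn (S : Set Ordinal.{0}) (l : Ordinal.{0}) : Prop :=
  ∀ C, IsClubIn C l → (S ∩ C).Nonempty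

/-- An ordinal is (the ordinal of) an inaccessible cardinal. -/
def InaccOrd (o : Ordinal.{0}) : Prop :=
  o.card.IsInaccessible ∧ o.card.ord = o

/-- An ordinal is (the ordinal of) a cardinal. -/
def IsCardOrd (o : Ordinal.{0}) : Prop := o.card.ord = o

/-- The cardinal successor of (the cardinality of) an ordinal, as an ordinal. -/
def cardSucc (o : Ordinal.{0}) : Ordinal.{0} := (Order.succ o.card).ord

/-- A Mahlo cardinal (as an ordinal). -/
def MahloOrd (o : Ordinal.{0}) : Prop :=
  InaccOrd o ∧ IsStationaryIn {δ | δ < o ∧ InaccOrd δ} o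

/-- `θ` is a successor inaccessible: inaccessible with an inaccessible predecessor
and no inaccessibles strictly in between. -/
def SuccInacc (θ : Ordinal.{0}) : Prop :=
  InaccOrd θ ∧ ∃ μ < θ, InaccOrd μ ∧ ∀ ν, μ < ν → ν < θ → ¬ InaccOrd ν

/-- `a` is a limit ordinal. -/
def IsLimitOrd (a : Ordinal.{0}) : Prop := 0 < a ∧ ∀ b < a, b + 1 < a

/-! ## The Lévy hierarchy of formulas (with `Σ₀ = ` quantifier-free) -/

mutual
  /-- `Σ_n` formulas (simplified Lévy hierarchy over quantifier-free formulas). -/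
  inductive IsSigmaF (L : Language) (α : Type u) : ℕ → ∀ {n : ℕ}, L.BoundedFormula α n → Prop
    | qf {m} {n : ℕ} {φ : L.BoundedFormula α n} : φ.IsQF → IsSigmaF L α m φ → IsSigmaF L α m φ
    | of_qf {n : ℕ} {φ : L.BoundedFormula α n} : φ.IsQF → IsSigmaF L α 0 φ
    | mono {m} {n : ℕ} {φ : L.BoundedFormula α n} : IsSigmaF L α m φ → IsSigmaF L α (m+1) φ
    | ex {m} {n : ℕ} {φ : L.BoundedFormula α (n+1)} :
        IsSigmaF L α (m+1) φ.ex → IsSigmaF L α (m+1) φ.ex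
    | step {m} {n : ℕ} {φ : L.BoundedFormula α (n+1)} :
        IsPiF L α m φ → IsSigmaF L α (m+1) φ.ex

  /-- `Π_n` formulas. -/
  inductive IsPiF (L : Language) (α : Type u) : ℕ → ∀ {n : ℕ}, L.BoundedFormula α n → Prop
    | of_qf {n : ℕ} {φ : L.BoundedFormula α n} : φ.IsQF → IsPiF L α 0 φ
    | mono {m} {n : ℕ} {φ : L.BoundedFormula α n} : IsPiF L α m φ → IsPiF L α (m+1) φ
    | step {m} {n : ℕ} {φ : L.BoundedFormula α (n+1)} :
        IsSigmaF L α m φ → IsPiF L α (m+1) φ.all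
end

/-- `θ ∈ C^{(n)}` relative to an ambient class `W` : `V_θ ∩ W` is a
`Σ_n`-elementary substructure of `W`. -/
def InCC (W : Set ZFSet.{0}) (n : ℕ) (θ : Ordinal.{0}) : Prop :=
  ∀ (k : ℕ) (φ : Language.order.Formula (Fin k)),
    (IsSigmaF Language.order (Fin k) n φ ∨ IsPiF Language.order (Fin k) n φ) →
    ∀ v : Fin k → (VsetIn W θ),
      φ.Realize v ↔ φ.Realize (fun i => (⟨(v i).1, (v i).2.1⟩ : W))

/-! ## Elementary embeddings of (relative) classes -/

/-- An elementary embedding `j : W → M` where `M ⊆ W` is a transitive subclass. -/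
structure ClassEmbOver (W : Set ZFSet.{0}) where
  M : Set ZFSet.{0}
  M_sub : M ⊆ W
  M_trans : ∀ x ∈ M, ∀ y : ZFSet, y ∈ x → y ∈ M
  j : ZFSet.{0} → ZFSet.{0}
  maps : ∀ x, x ∈ W → j x ∈ M
  elem : ∀ (k : ℕ) (φ : Language.order.Formula (Fin k)) (v : Fin k → W),
    φ.Realize v ↔ φ.Realize (fun i => (⟨j (v i).1, maps _ (v i).2⟩ : M))

variable {W : Set ZFSet.{0}}

/-- `j` has critical point `κ`. -/
def critAt (e : ClassEmbOver W) (κ : Ordinal.{0}) : Prop :=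
  (∀ α < κ, e.j (ordZF α) = ordZF α) ∧ e.j (ordZF κ) ≠ ordZF κ

/-- The image `j(κ)` of an ordinal, as an ordinal. -/
def targ (e : ClassEmbOver W) (κ : Ordinal.{0}) : Ordinal.{0} := (e.j (ordZF κ)).rank

/-- `M^λ ∩ W ⊆ M`. -/
def SeqClosed (e : ClassEmbOver W) (l : Ordinal.{0}) : Prop :=
  ∀ f y : ZFSet.{0}, f ∈ W → ZFSet.IsFunc (ordZF l) y f →
    (∀ z w : ZFSet, z.pair w ∈ f → w ∈ e.M) → f ∈ e.M

/-- `V_θ ⊆ M`. -/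
def VsubM (e : ClassEmbOver W) (θ : Ordinal.{0}) : Prop :=
  ∀ x : ZFSet, x ∈ W → x.rank < θ → x ∈ e.M

/-- A `ZFSet` codes a set of ordinals below `l`. -/
def zfSubsetOrd (s : ZFSet.{0}) (l : Ordinal.{0}) : Prop :=
  ∀ x ∈ s, ∃ α < l, x = ordZF α

/-- The set of ordinals coded by a `ZFSet`. -/
def toOrdSet (s : ZFSet.{0}) : Set Ordinal.{0} := {α | ordZF α ∈ s}

/-- `M` computes stationary subsets of `l` correctly. -/
def StatCorrect (e : ClassEmbOver W) (l : Ordinal.{0}) : Prop :=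
  ∀ s ∈ e.M, zfSubsetOrd s l →
    (IsStationaryIn (toOrdSet s) l ↔
      ∀ C ∈ e.M, zfSubsetOrd C l → IsClubIn (toOrdSet C) l →
        (toOrdSet s ∩ toOrdSet C).Nonempty)

/-! ## Large cardinal notions -/

/-- `κ` is tall with target `θ` (relative to `W`). -/
def TallWithTarget (W : Set ZFSet.{0}) (κ θ : Ordinal.{0}) : Prop :=
  ∃ e : ClassEmbOver W, critAt e κ ∧ SeqClosed e κ ∧ targ e κ = θ

/-- `κ` is `λ`-supercompact. -/
def IsLamSC (W : Set ZFSet.{0}) (κ l : Ordinal.{0}) : Prop :=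
  ∃ e : ClassEmbOver W, critAt e κ ∧ l < targ e κ ∧ SeqClosed e l

/-- `κ` is supercompact. -/
def IsSC (W : Set ZFSet.{0}) (κ : Ordinal.{0}) : Prop :=
  ∀ l, κ < l → IsLamSC W κ l

/-- `κ` is `λ`-`C^{(n)}`-supercompact. -/
def IsLamCnSC (W : Set ZFSet.{0}) (n : ℕ) (κ l : Ordinal.{0}) : Prop :=
  ∃ e : ClassEmbOver W, critAt e κ ∧ l < targ e κ ∧ SeqClosed e l ∧ InCC W n (targ e κ)

/-- `κ` is `C^{(n)}`-supercompact. -/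
def IsCnSC (W : Set ZFSet.{0}) (n : ℕ) (κ : Ordinal.{0}) : Prop :=
  ∀ l, κ < l → IsLamCnSC W n κ l

/-- `κ` is enhanced `C^{(n)}`-tall: for every `λ > κ` there is `θ ∈ C^{(n)}` of
cofinality `> λ` such that `κ` is tall with target `θ`. -/
def EnhancedCnTall (W : Set ZFSet.{0}) (n : ℕ) (κ : Ordinal.{0}) : Prop :=
  ∀ l, κ < l → ∃ θ, InCC W n θ ∧ l < θ.cof.ord ∧ TallWithTarget W κ θ

/-- `κ` is superstrong with target `θ`. -/
def SuperstrongTarget (W : Set ZFSet.{0}) (κ θ : Ordinal.{0}) : Prop :=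
  ∃ e : ClassEmbOver W, critAt e κ ∧ targ e κ = θ ∧ VsubM e θ

/-- `κ` is enhanced superstrong with target `θ`: additionally `M^κ ⊆ M`. -/
def EnhSuperstrongTarget (W : Set ZFSet.{0}) (κ θ : Ordinal.{0}) : Prop :=
  ∃ e : ClassEmbOver W, critAt e κ ∧ targ e κ = θ ∧ VsubM e θ ∧ SeqClosed e κ

/-- `κ` is stationary-correct superstrong with target `θ`. -/
def StatCorrectSuperstrong (W : Set ZFSet.{0}) (κ θ : Ordinal.{0}) : Prop :=
  ∃ e : ClassEmbOver W, critAt e κ ∧ targ e κ = θ ∧ VsubM e θ ∧ StatCorrect e θ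

/-! ## Axiom 𝒜 -/

/-- Axiom `𝒜`, relative to `W`. -/
def AxiomA (W : Set ZFSet.{0}) : Prop :=
  (∀ α : Ordinal, ∃ κ, α < κ ∧ InaccOrd κ) ∧
  (∀ δ l, StatCorrectSuperstrong W δ l → InaccOrd l →
    ∀ θ, δ < θ → θ < l → SuccInacc θ → TallWithTarget W δ θ)

/-- Elementary embedding between two set-sized structures `⟨A,∈⟩ → ⟨B,∈⟩`. -/
structure SetEmb (A B : Set ZFSet.{0}) where
  j : ZFSet.{0} → ZFSet.{0}
  maps : ∀ x, x ∈ A → j x ∈ B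
  elem : ∀ (k : ℕ) (φ : Language.order.Formula (Fin k)) (v : Fin k → A),
    φ.Realize v ↔ φ.Realize (fun i => (⟨j (v i).1, maps _ (v i).2⟩ : B))

/-- critical point for set embeddings. -/
def setCritAt (A B : Set ZFSet.{0}) (e : SetEmb A B) (κ : Ordinal.{0}) : Prop :=
  (∀ α < κ, e.j (ordZF α) = ordZF α) ∧ e.j (ordZF κ) ≠ ordZF κ

/-- `j(κ)` for set embeddings. -/
def setTarg (A B : Set ZFSet.{0}) (e : SetEmb A B) (κ : Ordinal.{0}) : Ordinal.{0} :=
  (e.j (ordZF κ)).rank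


/-! ## Trees with a level function -/

/-- A tree on a set of ordinals, presented with a level function. -/
structure LvTree : Type 1 where
  node : Set Ordinal.{0}
  lt : Ordinal.{0} → Ordinal.{0} → Prop
  level : Ordinal.{0} → Ordinal.{0}
  lt_mem : ∀ {x y}, lt x y → x ∈ node ∧ y ∈ node
  lt_trans' : ∀ {x y z}, lt x y → lt y z → lt x z
  level_mono : ∀ {x y}, lt x y → level x < level y
  pred_linear : ∀ {x y z}, lt y x → lt z x → lt y z ∨ y = z ∨ lt z y
  pred_ex : ∀ x ∈ node, ∀ β < level x, ∃ y, lt y x ∧ level y = β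

/-- The `β`-th level of the tree. -/
def LvTree.lvl (T : LvTree) (β : Ordinal.{0}) : Set Ordinal.{0} :=
  {x | x ∈ T.node ∧ T.level x = β}

/-- The nodes of level `< β`. -/
def LvTree.below (T : LvTree) (β : Ordinal.{0}) : Set Ordinal.{0} :=
  {x | x ∈ T.node ∧ T.level x < β}

/-- Two tree-incomparable nodes. -/
def LvTree.Incomp (T : LvTree) (x y : Ordinal.{0}) : Prop :=
  ¬ T.lt x y ∧ ¬ T.lt y x ∧ x ≠ y

/-- There is a regressive map on the `δ`-th level: `f x <_T x` and for incomparable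
`x, y` every common predecessor lies below both `f x` and `f y`
(i.e. `x ∧ y <_T f x, f y`). -/
def RegressiveAt (T : LvTree) (δ : Ordinal.{0}) : Prop :=
  ∃ f : Ordinal.{0} → Ordinal.{0},
    (∀ x ∈ T.lvl δ, T.lt (f x) x) ∧
    (∀ x ∈ T.lvl δ, ∀ y ∈ T.lvl δ, T.Incomp x y →
      ∀ z, T.lt z x → T.lt z y → T.lt z (f x) ∧ T.lt z (f y))

/-- A chain in the tree. -/
def IsTreeChain (T : LvTree) (b : Set Ordinal.{0}) : Prop :=
  b ⊆ T.node ∧ ∀ x ∈ b, ∀ y ∈ b, T.lt x y ∨ x = y ∨ T.lt y x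

/-- A branch: a maximal chain. -/
def IsTreeBranch (T : LvTree) (b : Set Ordinal.{0}) : Prop :=
  IsTreeChain T b ∧ ∀ b', IsTreeChain T b' → b ⊆ b' → b = b'

/-- A cofinal branch of a tree of height `κ`. -/
def CofBranch (T : LvTree) (κ : Ordinal.{0}) (b : Set Ordinal.{0}) : Prop :=
  IsTreeBranch T b ∧ ∀ β < κ, ∃ x ∈ b, T.level x = β

/-- A `κ`-regressive `κ`-Kurepa tree on `κ`. -/
def KurepaTree (κ : Ordinal.{0}) (T : LvTree) : Prop :=
  T.node ⊆ Set.Iio κ ∧ (∀ x ∈ T.node, T.level x < κ) ∧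
  (∀ β < κ, (T.lvl β).Nonempty) ∧
  (∀ β < κ, Cardinal.mk (T.lvl β) < Cardinal.lift.{1} κ.card) ∧
  Cardinal.lift.{1} (Order.succ κ.card) ≤ Cardinal.mk {b : Set Ordinal.{0} | CofBranch T κ b} ∧
  (∀ δ < κ, InaccOrd δ → RegressiveAt T δ)

/-! The node `j(b)_κ` of level `κ` lies above exactly the nodes of `b`, so distinct branches
give distinct, hence incomparable, nodes of level `κ`; their common predecessors then lie
below `f (j(b)_κ)`, which rules out a common node of `b` and `b'` above it. -/

namespace LvTree

variable (T : LvTree)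

theorem lt_irrefl (x : Ordinal.{0}) : ¬ T.lt x x :=
  fun h => (T.level_mono h).false

theorem incomp_of_level_eq {x y : Ordinal.{0}} (hxy : x ≠ y) (hlevel : T.level x = T.level y) :
    T.Incomp x y :=
  ⟨fun h => (T.level_mono h).ne hlevel, fun h => (T.level_mono h).ne hlevel.symm, hxy⟩

theorem not_lt_of_lt_of_lt_of_regressive {δ : Ordinal.{0}} {f : Ordinal.{0} → Ordinal.{0}}
    (hf : ∀ x ∈ T.lvl δ, ∀ y ∈ T.lvl δ, T.Incomp x y →
      ∀ z, T.lt z x → T.lt z y → T.lt z (f x) ∧ T.lt z (f y))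
    {x y u : Ordinal.{0}} (hx : x ∈ T.lvl δ) (hy : y ∈ T.lvl δ) (hxy : x ≠ y)
    (hux : T.lt u x) (huy : T.lt u y) : ¬ T.lt (f x) u := fun hfu =>
  have hinc : T.Incomp x y := T.incomp_of_level_eq hxy (hx.2.trans hy.2.symm)
  T.lt_irrefl u (T.lt_trans' (hf x hx y hy hinc u hux huy).1 hfu)

end LvTree

theorem eq_setOf_lt_of_forall_lt_iff {S : Set Ordinal.{0}} {T : LvTree} {b : Set Ordinal.{0}}
    {t : Ordinal.{0}} (hb : b ⊆ S) (h : ∀ x ∈ S, T.lt x t ↔ x ∈ b) :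
    b = {x ∈ S | T.lt x t} := by
  ext x
  exact ⟨fun hx => ⟨hb hx, (h x (hb hx)).2 hx⟩, fun hx => (h x hx.1).1 hx.2⟩

/-- Let `κ` be inaccessible, `T` a `κ`-regressive `κ`-Kurepa tree
and `j : V → M` elementary with critical point `κ`.  Let `T'` play the role of
`j(T)` (so that `T` is the restriction of `T'` below level `κ`), let `g` assign to
each cofinal branch `b` of `T` the node `j(b)_κ` of `T'` at level `κ`, and let `f`
be a regressive map on the `κ`-th level of `T'` (in `M`).  Then the map sending
each cofinal branch `b` to `b_{α_b}`, where `α_b` is least with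
`f(j(b)_κ) <_{T'} j(b)_{α_b}`, is injective. -/
theorem stmt_3 (κ : Ordinal.{0}) (hκ : InaccOrd κ)
    (T T' : LvTree) (hT : KurepaTree κ T)
    (hnode : T.node = T'.below κ)
    (hlt : ∀ x ∈ T.node, ∀ y ∈ T.node, (T.lt x y ↔ T'.lt x y))
    (hlev : ∀ x ∈ T.node, T.level x = T'.level x)
    (e : ClassEmbOver Set.univ) (hcrit : critAt e κ)
    (g : Set Ordinal.{0} → Ordinal.{0})
    (hg : ∀ b, CofBranch T κ b → g b ∈ T'.lvl κ ∧ ∀ x ∈ T.node, (T'.lt x (g b) ↔ x ∈ b))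
    (f : Ordinal.{0} → Ordinal.{0})
    (hf : ∀ x ∈ T'.lvl κ, T'.lt (f x) x)
    (hf2 : ∀ x ∈ T'.lvl κ, ∀ y ∈ T'.lvl κ, T'.Incomp x y →
        ∀ z, T'.lt z x → T'.lt z y → T'.lt z (f x) ∧ T'.lt z (f y)) :
    ∀ b b', CofBranch T κ b → CofBranch T κ b' →
      ∀ u u',
        (u ∈ b ∧ T'.lt (f (g b)) u ∧
          ∀ w ∈ b, T'.lt (f (g b)) w → T.level u ≤ T.level w) →
        (u' ∈ b' ∧ T'.lt (f (g b')) u' ∧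
          ∀ w ∈ b', T'.lt (f (g b')) w → T.level u' ≤ T.level w) →
        u = u' → b = b' := by
  rintro b b' hb hb' u _ ⟨hub, hfu, -⟩ ⟨hub', -, -⟩ rfl
  by_contra hne
  obtain ⟨hgb_lvl, hgb_below⟩ := hg b hb
  obtain ⟨hgb'_lvl, hgb'_below⟩ := hg b' hb'
  have hsub : b ⊆ T.node := hb.1.1.1
  have hsub' : b' ⊆ T.node := hb'.1.1.1
  have hdist : g b ≠ g b' := fun h => hne <| by
    rw [eq_setOf_lt_of_forall_lt_iff hsub hgb_below, eq_setOf_lt_of_forall_lt_iff hsub' hgb'_below, h]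
  exact T'.not_lt_of_lt_of_lt_of_regressive hf2 hgb_lvl hgb'_lvl hdist
    ((hgb_below u (hsub hub)).2 hub) ((hgb'_below u (hsub hub)).2 hub') hfu

end
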